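/- arXiv:1602.02705 — 2 statements merged into one kernel-verified Lean document; each statement's English description precedes it below -/
import Mathlib

section
/- Let N and p be primes with p | N-1, ν = v_p(N-1), and log : (Z/NZ)^× → Z/p^ν Z a surjective homomorphism. Then ∑_{k=1}^{N-1} k·log(k) ≡ 0 (mod p^ν). -/
open Classical in
/-- The discrete logarithm attached to a homomorphism
`log : (Z/NZ)ˣ → Z/MZ`, extended by `0` to non-units of `Z/NZ`. -/
noncomputable def dlog {N M : ℕ} (log : (ZMod N)ˣ →* Multiplicative (ZMod M))
    (x : ZMod N) : ZMod M :=
  if h : IsUnit x then Multiplicative.toAdd (log h.unit) else 0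

/-!
Since `M ∣ N - 1`, the reflection `k ↦ N - k` acts on `k` modulo `M` as `k ↦ 1 - k`, and, because
`2 log(-1) = log 1 = 0` with `2` invertible mod `M`, it leaves `log k` unchanged. Hence the sum `S` satisfies
`S = ∑ log k - S`, while `∑ log k = log ((N - 1)!) = log (-1) = 0` by Wilson's theorem; so `2S = 0`.
-/

open Finset

section dlog

variable {N M : ℕ} (log : (ZMod N)ˣ →* Multiplicative (ZMod M))

lemma dlog_coe_unit (u : (ZMod N)ˣ) : dlog log (u : ZMod N) = (log u).toAdd := by
  rw [dlog, dif_pos u.isUnit, IsUnit.unit_of_val_units]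

lemma dlog_one : dlog log 1 = 0 := by
  simpa using dlog_coe_unit log 1

lemma dlog_mul {x y : ZMod N} (hx : IsUnit x) (hy : IsUnit y) :
    dlog log (x * y) = dlog log x + dlog log y := by
  rw [← hx.unit_spec, ← hy.unit_spec, ← Units.val_mul, dlog_coe_unit, dlog_coe_unit,
    dlog_coe_unit, map_mul, toAdd_mul]

lemma dlog_prod {ι : Type*} (s : Finset ι) (f : ι → ZMod N) (hf : ∀ i ∈ s, IsUnit (f i)) :
    dlog log (∏ i ∈ s, f i) = ∑ i ∈ s, dlog log (f i) := by
  induction s using Finset.cons_induction with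
  | empty => simpa using dlog_one log
  | cons a s ha ih =>
    rw [forall_mem_cons] at hf
    rw [prod_cons, sum_cons, dlog_mul log hf.1 (IsUnit.prod_iff.mpr hf.2), ih hf.2]

lemma dlog_neg_one (h2 : IsUnit (2 : ZMod M)) : dlog log (-1) = 0 := by
  refine h2.mul_right_eq_zero.mp ?_
  rw [two_mul, ← dlog_mul log isUnit_one.neg isUnit_one.neg, neg_one_mul, neg_neg, dlog_one]

lemma dlog_neg (h2 : IsUnit (2 : ZMod M)) {x : ZMod N} (hx : IsUnit x) :
    dlog log (-x) = dlog log x := by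
  rw [← neg_one_mul, dlog_mul log isUnit_one.neg hx, dlog_neg_one log h2, zero_add]

end dlog

lemma sum_Icc_sub_reflect {M : Type*} [AddCommMonoid M] (f : ℕ → M) (n : ℕ) :
    ∑ k ∈ Icc 1 (n - 1), f (n - k) = ∑ k ∈ Icc 1 (n - 1), f k :=
  sum_nbij' (fun k => n - k) (fun k => n - k)
    (fun k hk => by simp only [mem_Icc] at hk ⊢; omega)
    (fun k hk => by simp only [mem_Icc] at hk ⊢; omega)
    (fun k hk => by simp only [mem_Icc] at hk; omega)
    (fun k hk => by simp only [mem_Icc] at hk; omega)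
    fun _ _ => rfl

lemma ZMod.isUnit_natCast_of_mem_Icc {N k : ℕ} (hN : N.Prime) (hk : k ∈ Icc 1 (N - 1)) :
    IsUnit (k : ZMod N) := by
  have : Fact N.Prime := ⟨hN⟩
  rw [mem_Icc] at hk
  refine isUnit_iff_ne_zero.mpr fun h => ?_
  have := Nat.le_of_dvd (by omega) ((ZMod.natCast_eq_zero_iff k N).mp h)
  omega

lemma sum_dlog_Icc_eq_zero {N M : ℕ} (hN : N.Prime) (log : (ZMod N)ˣ →* Multiplicative (ZMod M))
    (h2 : IsUnit (2 : ZMod M)) : ∑ k ∈ Icc 1 (N - 1), dlog log (k : ZMod N) = 0 := by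
  have : Fact N.Prime := ⟨hN⟩
  rw [← dlog_prod log _ _ fun k hk => ZMod.isUnit_natCast_of_mem_Icc hN hk, ← Nat.cast_prod,
    ← Ico_add_one_right_eq_Icc, prod_Ico_id_eq_factorial, ZMod.wilsons_lemma, dlog_neg_one log h2]

theorem sum_mul_dlog_eq_zero {N M : ℕ} (hN : N.Prime) (hM : M ∣ N - 1)
    (h2 : IsUnit (2 : ZMod M)) (log : (ZMod N)ˣ →* Multiplicative (ZMod M)) :
    ∑ k ∈ Icc 1 (N - 1), (k : ZMod M) * dlog log (k : ZMod N) = 0 := by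
  set S := ∑ k ∈ Icc 1 (N - 1), (k : ZMod M) * dlog log (k : ZMod N)
  have hN1 : (N : ZMod M) = 1 := by
    rw [← Nat.sub_add_cancel hN.one_le, Nat.cast_add, (ZMod.natCast_eq_zero_iff _ _).mpr hM,
      Nat.cast_one, zero_add]
  have reflect :
      S = ∑ k ∈ Icc 1 (N - 1), ((N - k : ℕ) : ZMod M) * dlog log ((N - k : ℕ) : ZMod N) :=
    (sum_Icc_sub_reflect (fun k => (k : ZMod M) * dlog log (k : ZMod N)) N).symm
  have reflect_term : ∀ k ∈ Icc 1 (N - 1),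
      ((N - k : ℕ) : ZMod M) * dlog log ((N - k : ℕ) : ZMod N)
        = (1 - k) * dlog log (k : ZMod N) := fun k hk => by
    have hkN : k ≤ N := by simp only [mem_Icc] at hk; omega
    rw [Nat.cast_sub hkN, Nat.cast_sub hkN, hN1, ZMod.natCast_self, zero_sub,
      dlog_neg log h2 (ZMod.isUnit_natCast_of_mem_Icc hN hk)]
  refine h2.mul_right_eq_zero.mp ?_
  calc 2 * S = ∑ k ∈ Icc 1 (N - 1), (1 - k) * dlog log (k : ZMod N) + S := by
        rw [two_mul, ← sum_congr rfl reflect_term, ← reflect]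
    _ = ∑ k ∈ Icc 1 (N - 1), dlog log (k : ZMod N) := by
        rw [← sum_add_distrib]
        exact sum_congr rfl fun k _ => by ring
    _ = 0 := sum_dlog_Icc_eq_zero hN log h2

theorem sum_mul_log_eq_zero_general (p N ν : ℕ) (hp : p.Prime) (hN : N.Prime)
    (hp5 : 5 ≤ p)
    (hν : ν = (N - 1).factorization p)
    (log : (ZMod N)ˣ →* Multiplicative (ZMod (p ^ ν))) :
    ∑ k ∈ Finset.Icc 1 (N - 1), (k : ZMod (p ^ ν)) * dlog log (k : ZMod N) = 0 := by
  have hcop : Nat.Coprime 2 (p ^ ν) :=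
    ((Nat.coprime_primes Nat.prime_two hp).mpr (by omega)).pow_right ν
  have h2 : IsUnit (2 : ZMod (p ^ ν)) := by
    exact_mod_cast (ZMod.isUnit_iff_coprime 2 (p ^ ν)).mpr hcop
  exact sum_mul_dlog_eq_zero hN (hν ▸ Nat.ordProj_dvd (N - 1) p) h2 log

/-- For primes `N, p ≥ 5` with `p ∣ N-1`, `ν = v_p(N-1)`, and a surjective
homomorphism `log : (Z/NZ)ˣ → Z/p^ν Z`, one has
`∑_{k=1}^{N-1} k·log(k) ≡ 0 (mod p^ν)`. -/
theorem sum_mul_log_eq_zero (p N ν : ℕ) (hp : p.Prime) (hN : N.Prime)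
    (hp5 : 5 ≤ p) (hN5 : 5 ≤ N) (hdvd : p ∣ N - 1)
    (hν : ν = (N - 1).factorization p)
    (log : (ZMod N)ˣ →* Multiplicative (ZMod (p ^ ν)))
    (hlog : Function.Surjective log) :
    ∑ k ∈ Finset.Icc 1 (N - 1), (k : ZMod (p ^ ν)) * dlog log (k : ZMod N) = 0 :=
  sum_mul_log_eq_zero_general p N ν hp hN hp5 hν log
end

section
/- Let p and N be primes with N ≡ 1 (mod p), ν = v_p(N-1), log : (Z/NZ)^× → Z/p^ν Z a surjective homomorphism, and χ a character of (Z/pZ)^× with χ ≠ 1, ω. Define L : I_H/I_H² → Z/p^ν Z by [a]-1 ↦ log(a), where I_H is the augmentation ideal of Z_p[(Z/NZ)^×]. Then φ_χ lies in I_H and L(φ_χ) ≡ -∑_{r=1}^{N-1} (∑_{a=1}^{r-1} χ^{-1}(a))·log(r) (mod p^ν). -/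
/-- The periodic first Bernoulli function: `B̄₁(x) = x - ⌊x⌋ - 1/2` for `x ∉ ℤ`,
and `B̄₁(x) = 0` for `x ∈ ℤ`. -/
noncomputable def bernoulliB1 (x : ℚ) : ℚ :=
  if (⌊x⌋ : ℚ) = x then 0 else x - ⌊x⌋ - 1 / 2

open Classical in
/-- `χ⁻¹` extended to the natural numbers: `a ↦ χ(a)⁻¹ ∈ ℤ_p` if `a` is prime to `p`,
and `0` otherwise. -/
noncomputable def chiInvZ {p : ℕ} [Fact p.Prime] (χ : (ZMod p)ˣ →* ℤ_[p]ˣ) (a : ℕ) : ℤ_[p] :=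
  if h : IsUnit ((a : ZMod p)) then (((χ h.unit)⁻¹ : ℤ_[p]ˣ) : ℤ_[p]) else 0

/-!
Both identities are finite-sum manipulations. The function `a ↦ χ⁻¹(a)` is `p`-periodic with
vanishing sum over a period (as `χ ≠ 1`), and the formula for `B̄₁` on `a/p` gives
`p · B_{1,χ⁻¹} = ∑_{a<p} a χ⁻¹(a)`; summation by parts over the `(N-1)/p` full periods in
`[1, N-1]` then makes the augmentation of `φ_χ` vanish. For the second identity,
`log(r⁻¹) = -log r`, and the `B_{1,χ⁻¹}` term drops out because `∑_{r=1}^{N-1} log r = 0`: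
this sum over `(Z/NZ)ˣ` is invariant under inversion, hence equal to its negative, and `p` is
odd since `(Z/2Z)ˣ` admits no nontrivial character.
-/

open Finset

theorem Finset.sum_Icc_one_eq_sum_range_succ {M : Type*} [AddCommMonoid M] (g : ℕ → M) (n : ℕ) :
    ∑ r ∈ Icc 1 n, g r = ∑ r ∈ range n, g (r + 1) := by
  rw [← Ico_add_one_right_eq_Icc, sum_Ico_eq_sum_range, Nat.add_sub_cancel]
  simp only [add_comm 1]

theorem Finset.sum_range_sum_range_succ {R : Type*} [CommRing R] (f : ℕ → R) (n : ℕ) :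
    ∑ r ∈ range n, ∑ a ∈ range (r + 1), f a = n * ∑ a ∈ range n, f a - ∑ a ∈ range n, a * f a := by
  induction n with
  | zero => simp
  | succ n ih =>
    rw [sum_range_succ, ih, sum_range_succ, sum_range_succ]
    push_cast
    ring

theorem ZMod.sum_univ_eq_sum_range {M : Type*} [AddCommMonoid M] {n : ℕ} [NeZero n]
    (g : ZMod n → M) : ∑ x, g x = ∑ a ∈ range n, g a :=
  Finset.sum_nbij' ZMod.val (↑) (fun x _ => mem_range.mpr x.val_lt) (fun _ _ => mem_univ _)
    (fun x _ => ZMod.natCast_zmod_val x) (fun _ ha => ZMod.val_natCast_of_lt (mem_range.mp ha))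
    (fun x _ => by rw [ZMod.natCast_zmod_val])

namespace Function.Periodic

variable {R : Type*} {f : ℕ → R} {p : ℕ}

theorem sum_range_mul [AddCommMonoid R] (hf : Periodic f p) (m : ℕ) :
    ∑ a ∈ range (m * p), f a = m • ∑ a ∈ range p, f a := by
  induction m with
  | zero => simp
  | succ m ih =>
    rw [Nat.succ_mul, sum_range_add, ih, succ_nsmul]
    congr 1
    exact sum_congr rfl fun a _ => by rw [add_comm]; simpa using hf.nat_mul m a

theorem sum_range_mul_natCast_mul [CommRing R] (hf : Periodic f p)
    (h0 : ∑ a ∈ range p, f a = 0) (m : ℕ) :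
    ∑ a ∈ range (m * p), a * f a = m * ∑ a ∈ range p, a * f a := by
  induction m with
  | zero => simp
  | succ m ih =>
    have shift (a : ℕ) : ((m * p + a : ℕ) : R) * f (m * p + a) = (m * p : ℕ) * f a + a * f a := by
      have hfa : f (a + m * p) = f a := by simpa using hf.nat_mul m a
      rw [add_comm (m * p), hfa]
      push_cast
      ring
    rw [Nat.succ_mul, sum_range_add, ih]
    simp only [shift, sum_add_distrib, ← mul_sum, h0]
    push_cast
    ring

theorem sum_Icc_add_sum_range_eq_zero [CommRing R] {M : ℕ} (hf : Periodic f p)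
    (h0 : ∑ a ∈ range p, f a = 0) {B : R} (hB : p * B = ∑ a ∈ range p, a * f a) (hM : p ∣ M) :
    ∑ r ∈ Icc 1 M, (B + ∑ a ∈ range r, f a) = 0 := by
  obtain ⟨m, rfl⟩ := hM
  rw [mul_comm, sum_Icc_one_eq_sum_range_succ, sum_add_distrib, sum_range_sum_range_succ,
    hf.sum_range_mul, h0, hf.sum_range_mul_natCast_mul h0, ← hB, sum_const, card_range]
  push_cast
  ring

end Function.Periodic

theorem chiInvZ_eq_ofUnitHom {p : ℕ} [Fact p.Prime] (χ : (ZMod p)ˣ →* ℤ_[p]ˣ) (a : ℕ) :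
    chiInvZ χ a = MulChar.ofUnitHom χ⁻¹ (a : ZMod p) := by
  by_cases ha : IsUnit (a : ZMod p)
  · rw [chiInvZ, dif_pos ha, ← MonoidHom.inv_apply, ← MulChar.ofUnitHom_coe, ha.unit_spec]
  · rw [chiInvZ, dif_neg ha, MulChar.map_nonunit _ ha]

theorem periodic_chiInvZ {p : ℕ} [Fact p.Prime] (χ : (ZMod p)ˣ →* ℤ_[p]ˣ) :
    Function.Periodic (chiInvZ χ) p := fun a => by
  simp only [chiInvZ_eq_ofUnitHom, Nat.cast_add, ZMod.natCast_self, add_zero]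

theorem sum_range_chiInvZ_eq_zero {p : ℕ} [Fact p.Prime] {χ : (ZMod p)ˣ →* ℤ_[p]ˣ}
    (hχ : χ ≠ 1) : ∑ a ∈ range p, chiInvZ χ a = 0 := by
  have hψ : MulChar.ofUnitHom χ⁻¹ ≠ 1 := fun h => hχ <| MonoidHom.ext fun u => by
    have hu := MulChar.ofUnitHom_coe χ⁻¹ u
    rw [h, MulChar.one_apply_coe, MonoidHom.inv_apply] at hu
    rw [MonoidHom.one_apply, ← inv_eq_one]
    exact Units.val_eq_one.mp hu.symm
  simp only [chiInvZ_eq_ofUnitHom, ← ZMod.sum_univ_eq_sum_range, MulChar.sum_eq_zero_of_ne_one hψ]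

theorem bernoulliB1_div_of_lt {a n : ℕ} (ha : 0 < a) (han : a < n) :
    bernoulliB1 (a / n) = a / n - 1 / 2 := by
  have hfloor : ⌊(a / n : ℚ)⌋ = 0 := Int.floor_eq_zero_iff.mpr
    ⟨by positivity, (div_lt_one (by exact_mod_cast ha.trans han)).mpr (by exact_mod_cast han)⟩
  have hne : (a / n : ℚ) ≠ 0 :=
    (div_pos (by exact_mod_cast ha) (by exact_mod_cast ha.trans han)).ne'
  rw [bernoulliB1, hfloor, Int.cast_zero, if_neg hne.symm, sub_zero]

theorem natCast_mul_sum_bernoulliB1_mul {K : Type*} [Field K] [CharZero K] {n : ℕ} {f : ℕ → K}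
    (hf0 : f 0 = 0) (hsum : ∑ a ∈ range n, f a = 0) :
    n * ∑ a ∈ range n, (bernoulliB1 (a / n) : K) * f a = ∑ a ∈ range n, a * f a := by
  calc n * ∑ a ∈ range n, (bernoulliB1 (a / n) : K) * f a
      = ∑ a ∈ range n, (a * f a - n / 2 * f a) := by
        rw [mul_sum]
        refine sum_congr rfl fun a ha => ?_
        rcases Nat.eq_zero_or_pos a with rfl | ha0
        · simp [hf0]
        · have hn : (n : K) ≠ 0 := by exact_mod_cast (ha0.trans (mem_range.mp ha)).ne'
          rw [bernoulliB1_div_of_lt ha0 (mem_range.mp ha)]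
          push_cast
          field_simp
    _ = ∑ a ∈ range n, a * f a := by rw [sum_sub_distrib, ← mul_sum, hsum, mul_zero, sub_zero]

theorem natCast_mul_eq_sum_mul_chiInvZ {p : ℕ} [Fact p.Prime] {χ : (ZMod p)ˣ →* ℤ_[p]ˣ}
    (hχ : χ ≠ 1) {B : ℤ_[p]} (hB : (B : ℚ_[p]) = ∑ a ∈ range p,
      (bernoulliB1 ((a : ℚ) / (p : ℚ)) : ℚ_[p]) * ((chiInvZ χ a : ℤ_[p]) : ℚ_[p])) :
    (p : ℤ_[p]) * B = ∑ a ∈ range p, a * chiInvZ χ a := by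
  apply PadicInt.ext
  rw [PadicInt.coe_mul, PadicInt.coe_sum, hB]
  push_cast
  refine natCast_mul_sum_bernoulliB1_mul (f := fun a => (chiInvZ χ a : ℚ_[p])) ?_ ?_
  · rw [chiInvZ_eq_ofUnitHom, Nat.cast_zero, MulChar.map_zero, PadicInt.coe_zero]
  · rw [← PadicInt.coe_sum, sum_range_chiInvZ_eq_zero hχ, PadicInt.coe_zero]

section dlog

variable {N M : ℕ} (log : (ZMod N)ˣ →* Multiplicative (ZMod M))

theorem dlog_units (u : (ZMod N)ˣ) : dlog log u = Multiplicative.toAdd (log u) := by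
  rw [dlog, dif_pos u.isUnit, IsUnit.unit_of_val_units]

variable [Fact N.Prime]

theorem dlog_zero : dlog log 0 = 0 :=
  dif_neg not_isUnit_zero

theorem dlog_inv (x : ZMod N) : dlog log x⁻¹ = -dlog log x := by
  rcases eq_or_ne x 0 with rfl | hx
  · rw [inv_zero, dlog_zero, neg_zero]
  · obtain ⟨u, rfl⟩ := hx.isUnit
    rw [← Units.val_inv_eq_inv_val, dlog_units, dlog_units, map_inv, toAdd_inv]

theorem sum_dlog_eq_zero (hM : Odd M) : ∑ x : ZMod N, dlog log x = 0 := by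
  have h2 : IsUnit (2 : ZMod M) := by
    exact_mod_cast (ZMod.unitOfCoprime 2 (Nat.coprime_two_left.mpr hM)).isUnit
  have hneg : ∑ x : ZMod N, dlog log x = -∑ x : ZMod N, dlog log x := by
    calc ∑ x : ZMod N, dlog log x = ∑ x : ZMod N, dlog log x⁻¹ :=
          (Equiv.sum_comp (Equiv.inv (ZMod N)) _).symm
      _ = -∑ x : ZMod N, dlog log x := by simp only [dlog_inv, sum_neg_distrib]
  rw [← h2.mul_right_eq_zero, two_mul]
  nth_rewrite 2 [hneg]
  exact add_neg_cancel _

theorem sum_Icc_dlog_natCast_eq_zero (hM : Odd M) :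
    ∑ r ∈ Icc 1 (N - 1), dlog log (r : ZMod N) = 0 := by
  have hN : 0 < N := (Fact.out : N.Prime).pos
  calc ∑ r ∈ Icc 1 (N - 1), dlog log (r : ZMod N)
      = dlog log ((0 : ℕ) : ZMod N) + ∑ r ∈ Ico 1 N, dlog log (r : ZMod N) := by
        rw [Nat.cast_zero, dlog_zero, zero_add, Icc_sub_one_right_eq_Ico_of_not_isMin]
        simpa using hN.ne'
    _ = ∑ x : ZMod N, dlog log x := by
        rw [ZMod.sum_univ_eq_sum_range, range_eq_Ico, sum_eq_sum_Ico_succ_bot hN]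
    _ = 0 := sum_dlog_eq_zero log hM

end dlog

theorem stickelberger_log_image_general (p N ν : ℕ) [Fact p.Prime] (hN : N.Prime)
    (hdvd : p ∣ N - 1)
    (log : (ZMod N)ˣ →* Multiplicative (ZMod (p ^ ν)))
    (χ : (ZMod p)ˣ →* ℤ_[p]ˣ) (hχ1 : χ ≠ 1)
    (B1χ : ℤ_[p])
    (hB1χ : (B1χ : ℚ_[p]) = ∑ a ∈ Finset.range p,
      (bernoulliB1 ((a : ℚ) / (p : ℚ)) : ℚ_[p]) * ((chiInvZ χ a : ℤ_[p]) : ℚ_[p])) :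
    (∑ r ∈ Finset.Icc 1 (N - 1), (B1χ + ∑ a ∈ Finset.range r, chiInvZ χ a) = 0)
    ∧ (∑ r ∈ Finset.Icc 1 (N - 1),
          (PadicInt.toZModPow ν (B1χ + ∑ a ∈ Finset.range r, chiInvZ χ a))
            * dlog log ((r : ZMod N)⁻¹)
        = - ∑ r ∈ Finset.Icc 1 (N - 1),
            (PadicInt.toZModPow ν (∑ a ∈ Finset.range r, chiInvZ χ a))
              * dlog log (r : ZMod N)) := by
  have : Fact N.Prime := ⟨hN⟩
  refine ⟨(periodic_chiInvZ χ).sum_Icc_add_sum_range_eq_zero (sum_range_chiInvZ_eq_zero hχ1)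
    (natCast_mul_eq_sum_mul_chiInvZ hχ1 hB1χ) hdvd, ?_⟩
  have hp2 : p ≠ 2 := by
    rintro rfl
    exact hχ1 (Subsingleton.elim _ _)
  have hodd : Odd (p ^ ν) := ((Fact.out : p.Prime).odd_of_ne_two hp2).pow
  simp only [dlog_inv, map_add, mul_neg, add_mul, sum_neg_distrib, sum_add_distrib, ← mul_sum,
    sum_Icc_dlog_natCast_eq_zero log hodd, mul_zero, zero_add]

/-- Let `p, N` be primes with `N ≡ 1 (mod p)`, `ν = v_p(N-1)`,
`log : (Z/NZ)ˣ → Z/p^ν Z` surjective, and `χ ≠ 1, ω` a character of `(Z/pZ)ˣ`. The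
twisted Stickelberger element `φ_χ = ∑_{r=1}^{N-1} (B_{1,χ⁻¹} + ∑_{a<r} χ⁻¹(a))·[r⁻¹]`
lies in the augmentation ideal `I_H` of `ℤ_p[(Z/NZ)ˣ]` (its augmentation vanishes), and
the map `L : I_H/I_H² → Z/p^ν Z, [a]-1 ↦ log a` sends it to
`-∑_{r=1}^{N-1} (∑_{a=1}^{r-1} χ⁻¹(a))·log(r) (mod p^ν)`. -/
theorem stickelberger_log_image (p N ν : ℕ) [Fact p.Prime] (hN : N.Prime)
    (hdvd : p ∣ N - 1) (hν : ν = (N - 1).factorization p)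
    (log : (ZMod N)ˣ →* Multiplicative (ZMod (p ^ ν)))
    (hlog : Function.Surjective log)
    (ω : (ZMod p)ˣ →* ℤ_[p]ˣ)
    (hω : ∀ a : (ZMod p)ˣ, PadicInt.toZMod ((ω a : ℤ_[p]ˣ) : ℤ_[p]) = (a : ZMod p))
    (χ : (ZMod p)ˣ →* ℤ_[p]ˣ) (hχ1 : χ ≠ 1) (hχω : χ ≠ ω)
    (B1χ : ℤ_[p])
    (hB1χ : (B1χ : ℚ_[p]) = ∑ a ∈ Finset.range p,
      (bernoulliB1 ((a : ℚ) / (p : ℚ)) : ℚ_[p]) * ((chiInvZ χ a : ℤ_[p]) : ℚ_[p])) :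
    (∑ r ∈ Finset.Icc 1 (N - 1), (B1χ + ∑ a ∈ Finset.range r, chiInvZ χ a) = 0)
    ∧ (∑ r ∈ Finset.Icc 1 (N - 1),
          (PadicInt.toZModPow ν (B1χ + ∑ a ∈ Finset.range r, chiInvZ χ a))
            * dlog log ((r : ZMod N)⁻¹)
        = - ∑ r ∈ Finset.Icc 1 (N - 1),
            (PadicInt.toZModPow ν (∑ a ∈ Finset.range r, chiInvZ χ a))
              * dlog log (r : ZMod N)) :=
  stickelberger_log_image_general p N ν hN hdvd log χ hχ1 B1χ hB1χ
end
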